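/- One has ψ₂(C_3) = 0, ψ₃(C_4) = 1, and for every integer n ≥ 5 the number of non-equivalent distinguishing coloring partitions of the cycle C_n with exactly n − 1 cells equals ⌊n/2⌋, i.e., ψ_{n−1}(C_n) = ⌊n/2⌋. -/

import Mathlib

open SimpleGraph

def IsDistinguishing {V : Type*} {k : ℕ} (G : SimpleGraph V) (c : V → Fin k) : Prop :=
  ∀ α : G ≃g G, (∀ v, c (α v) = c v) → ∀ v, α v = v

noncomputable def Phi {V : Type*} (G : SimpleGraph V) (k : ℕ) : ℕ :=
  Nat.card (Quot (fun c₁ c₂ : {c : V → Fin k // IsDistinguishing G c} =>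
    ∃ α : G ≃g G, ∀ v, c₁.1 v = c₂.1 (α v)))

noncomputable def phi {V : Type*} (G : SimpleGraph V) (k : ℕ) : ℕ :=
  Nat.card (Quot (fun c₁ c₂ : {c : V → Fin k // IsDistinguishing G c ∧ Function.Surjective c} =>
    ∃ α : G ≃g G, ∀ v, c₁.1 v = c₂.1 (α v)))

noncomputable def theta {V : Type*} (G : SimpleGraph V) : ℕ :=
  sInf {t | ∀ k, t ≤ k → ∀ c : V → Fin k, Function.Surjective c → IsDistinguishing G c}

def stirling2 : ℕ → ℕ → ℕ
  | 0, 0 => 1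
  | 0, _ + 1 => 0
  | _ + 1, 0 => 0
  | n + 1, k + 1 => (k + 1) * stirling2 n (k + 1) + stirling2 n k

def IsDCPartition {V : Type*} [DecidableEq V] [Fintype V] (G : SimpleGraph V)
    (P : Finpartition (Finset.univ : Finset V)) : Prop :=
  ∀ α : G ≃g G, (∀ p ∈ P.parts, p.image ⇑α = p) → ∀ v, α v = v

def IsDPartition {V : Type*} [DecidableEq V] [Fintype V] (G : SimpleGraph V)
    (P : Finpartition (Finset.univ : Finset V)) : Prop :=
  ∀ α : G ≃g G, P.parts.image (fun p => p.image ⇑α) = P.parts → ∀ v, α v = v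

def PartEquiv {V : Type*} [DecidableEq V] [Fintype V] (G : SimpleGraph V)
    (P₁ P₂ : Finpartition (Finset.univ : Finset V)) : Prop :=
  ∃ α : G ≃g G, P₁.parts.image (fun p => p.image ⇑α) = P₂.parts

noncomputable def psi {V : Type*} [DecidableEq V] [Fintype V] (G : SimpleGraph V) (k : ℕ) : ℕ :=
  Nat.card (Quot (fun P₁ P₂ : {P : Finpartition (Finset.univ : Finset V) //
      IsDCPartition G P ∧ P.parts.card = k} => PartEquiv G P₁.1 P₂.1))

noncomputable def PsiAtMost {V : Type*} [DecidableEq V] [Fintype V] (G : SimpleGraph V) (k : ℕ) : ℕ :=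
  Nat.card (Quot (fun P₁ P₂ : {P : Finpartition (Finset.univ : Finset V) //
      IsDCPartition G P ∧ P.parts.card ≤ k} => PartEquiv G P₁.1 P₂.1))

noncomputable def PiAtMost {V : Type*} [DecidableEq V] [Fintype V] (G : SimpleGraph V) (k : ℕ) : ℕ :=
  Nat.card (Quot (fun P₁ P₂ : {P : Finpartition (Finset.univ : Finset V) //
      P.parts.card ≤ k} => PartEquiv G P₁.1 P₂.1))

noncomputable def XiAtMost {V : Type*} [DecidableEq V] [Fintype V] (G : SimpleGraph V) (k : ℕ) : ℕ :=
  Nat.card (Quot (fun P₁ P₂ : {P : Finpartition (Finset.univ : Finset V) //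
      IsDPartition G P ∧ P.parts.card ≤ k} => PartEquiv G P₁.1 P₂.1))

def kneserGraph2 (n : ℕ) : SimpleGraph {s : Finset (Fin n) // s.card = 2} where
  Adj a b := Disjoint a.1 b.1
  symm := ⟨fun a b h => h.symm⟩
  loopless := by
    constructor
    rintro ⟨s, hs⟩ h
    simp only [disjoint_self, Finset.bot_eq_empty] at h
    simp [h] at hs

def lexProd {V W : Type*} (X : SimpleGraph V) (Y : SimpleGraph W) : SimpleGraph (V × W) where
  Adj a b := X.Adj a.1 b.1 ∨ (a.1 = b.1 ∧ Y.Adj a.2 b.2)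
  symm := by
    constructor
    rintro ⟨x, y⟩ ⟨x', y'⟩ (h | ⟨h, h'⟩)
    · exact Or.inl h.symm
    · exact Or.inr ⟨h.symm, h'.symm⟩
  loopless := by
    constructor
    rintro ⟨x, y⟩ (h | ⟨-, h⟩)
    · exact X.irrefl h
    · exact Y.irrefl h

def IsNaturalAut {V W : Type*} (X : SimpleGraph V) (Y : SimpleGraph W)
    (μ : lexProd X Y ≃g lexProd X Y) : Prop :=
  ∀ x : V, ∃ x' : V, (fun p => μ p) '' ({x} ×ˢ (Set.univ : Set W)) = {x'} ×ˢ (Set.univ : Set W)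

noncomputable def distNumber {V : Type*} (G : SimpleGraph V) : ℕ :=
  sInf {k | ∃ c : V → Fin k, IsDistinguishing G c}

namespace CycleAux
open Finset
open Fin.NatCast Fin.CommRing

variable {n : ℕ} [NeZero n]

lemma val_one' (hn : 3 ≤ n) : (1 : Fin n).val = 1 := by
  rw [show (1 : Fin n) = ((1:ℕ) : Fin n) by push_cast; ring, Fin.val_natCast]
  exact Nat.mod_eq_of_lt (by omega)

lemma cyc_adj (hn : 3 ≤ n) {u v : Fin n} :
    (cycleGraph n).Adj u v ↔ v = u + 1 ∨ v = u - 1 := by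
  rw [cycleGraph_adj']
  have h1 := val_one' hn
  constructor
  · rintro (h | h)
    · right
      have h2 : u - v = 1 := Fin.ext (by rw [h, h1])
      have : v = u - (u - v) := by ring
      rw [this, h2]
    · left
      have h2 : v - u = 1 := Fin.ext (by rw [h, h1])
      have : v = u + (v - u) := by ring
      rw [this, h2]
  · rintro (h | h)
    · right; rw [h, show u + 1 - u = 1 by ring, h1]
    · left; rw [h, show u - (u - 1) = 1 by ring, h1]

lemma cyc_adj'' (hn : 3 ≤ n) (u : Fin n) : (cycleGraph n).Adj u (u + 1) :=
  (cyc_adj hn).2 (Or.inl rfl)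

lemma fin_two_ne_zero (hn : 3 ≤ n) : (2 : Fin n) ≠ 0 := by
  intro h
  have h2 : ((2:ℕ) : Fin n).val = 2 % n := Fin.val_natCast 2 n
  rw [show ((2:ℕ) : Fin n) = (2 : Fin n) by push_cast; ring, h,
    Nat.mod_eq_of_lt (show 2 < n by omega)] at h2
  simp at h2

lemma aut_step (hn : 3 ≤ n) (α : cycleGraph n ≃g cycleGraph n) (x : Fin n) :
    α (x + 1) = α x + 1 ∨ α (x + 1) = α x - 1 := by
  have h := α.map_rel_iff.2 (cyc_adj'' hn x)
  rw [cyc_adj hn] at h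
  exact h

lemma aut_cases (hn : 3 ≤ n) (α : cycleGraph n ≃g cycleGraph n) :
    (∀ x, α x = α 0 + x) ∨ (∀ x, α x = α 0 - x) := by
  have h01 := aut_step hn α 0
  rw [zero_add] at h01
  have cast2 : ∀ k : ℕ, ((k + 2 : ℕ) : Fin n) = ((k : ℕ) : Fin n) + 2 := by
    intro k; push_cast; ring
  have cast1 : ∀ k : ℕ, ((k + 1 : ℕ) : Fin n) = ((k : ℕ) : Fin n) + 1 := by
    intro k; push_cast; ring
  rcases h01 with h1 | h1
  · left
    have key : ∀ k : ℕ, α (k : Fin n) = α 0 + (k : Fin n) ∧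
        α ((k + 1 : ℕ) : Fin n) = α 0 + ((k + 1 : ℕ) : Fin n) := by
      intro k
      induction k with
      | zero => constructor <;> simp [h1]
      | succ k ih =>
        refine ⟨ih.2, ?_⟩
        have hs := aut_step hn α ((k + 1 : ℕ) : Fin n)
        rw [← cast1 (k+1)] at hs
        rcases hs with hs | hs
        · rw [hs, ih.2]; push_cast; ring
        · exfalso
          have heq : α ((k + 1 + 1 : ℕ) : Fin n) = α ((k : ℕ) : Fin n) := by
            rw [hs, ih.2, ih.1]; push_cast; ring
          have h2 := α.injective heq
          push_cast at h2
          exact fin_two_ne_zero hn (by linear_combination h2)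
    intro x
    have := (key x.val).1
    rwa [Fin.cast_val_eq_self] at this
  · right
    have key : ∀ k : ℕ, α (k : Fin n) = α 0 - (k : Fin n) ∧
        α ((k + 1 : ℕ) : Fin n) = α 0 - ((k + 1 : ℕ) : Fin n) := by
      intro k
      induction k with
      | zero => constructor <;> simp [h1, sub_eq_add_neg]
      | succ k ih =>
        refine ⟨ih.2, ?_⟩
        have hs := aut_step hn α ((k + 1 : ℕ) : Fin n)
        rw [← cast1 (k+1)] at hs
        rcases hs with hs | hs
        · exfalso
          have heq : α ((k + 1 + 1 : ℕ) : Fin n) = α ((k : ℕ) : Fin n) := by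
            rw [hs, ih.2, ih.1]; push_cast; ring
          have h2 := α.injective heq
          push_cast at h2
          exact fin_two_ne_zero hn (by linear_combination h2)
        · rw [hs, ih.2]; push_cast; ring
    intro x
    have := (key x.val).1
    rwa [Fin.cast_val_eq_self] at this

lemma double_unique (hn : 3 ≤ n) {w₁ w₂ : Fin n} (h₁ : w₁ + w₁ = 0) (h₂ : w₂ + w₂ = 0)
    (hw₁ : w₁ ≠ 0) (hw₂ : w₂ ≠ 0) : w₁ = w₂ := by
  have key : ∀ w : Fin n, w + w = 0 → w ≠ 0 → w.val + w.val = n := by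
    intro w h hw
    have hv : (w.val + w.val) % n = 0 := by
      have := congrArg Fin.val h
      rwa [Fin.val_add, Fin.val_zero] at this
    have hlt : w.val < n := w.isLt
    have hpos : 0 < w.val := Nat.pos_of_ne_zero (fun h0 => hw (Fin.ext h0))
    rcases lt_or_ge (w.val + w.val) n with h' | h'
    · rw [Nat.mod_eq_of_lt h'] at hv; omega
    · rw [Nat.mod_eq_sub_mod h', Nat.mod_eq_of_lt (by omega)] at hv; omega
  have k1 := key w₁ h₁ hw₁
  have k2 := key w₂ h₂ hw₂
  exact Fin.ext (by omega)

lemma fix_two (hn : 3 ≤ n) (α : cycleGraph n ≃g cycleGraph n) {x y : Fin n}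
    (hne : x + x ≠ y + y) (hx : α x = x) (hy : α y = y) : ∀ v, α v = v := by
  rcases aut_cases hn α with h | h
  · have : α 0 = 0 := by have := h x; rw [hx] at this; linear_combination -this
    intro v; rw [h v, this, zero_add]
  · exfalso
    have h1 := h x; rw [hx] at h1
    have h2 := h y; rw [hy] at h2
    exact hne (by linear_combination h1 - h2)

def rotIso (hn : 3 ≤ n) (c : Fin n) : cycleGraph n ≃g cycleGraph n where
  toEquiv := Equiv.addRight c
  map_rel_iff' := by
    intro u v
    simp only [Equiv.coe_addRight]
    rw [cyc_adj hn, cyc_adj hn]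
    constructor
    · rintro (h | h)
      · left; linear_combination h
      · right; linear_combination h
    · rintro (h | h)
      · left; linear_combination h
      · right; linear_combination h

def reflIso (hn : 3 ≤ n) (c : Fin n) : cycleGraph n ≃g cycleGraph n where
  toEquiv := Equiv.subLeft c
  map_rel_iff' := by
    intro u v
    simp only [Equiv.subLeft_apply]
    rw [cyc_adj hn, cyc_adj hn]
    constructor
    · rintro (h | h)
      · right; linear_combination -h
      · left; linear_combination -h
    · rintro (h | h)
      · right; linear_combination -h
      · left; linear_combination -h

@[simp] lemma rotIso_apply (hn : 3 ≤ n) (c x : Fin n) : rotIso hn c x = x + c := rfl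
@[simp] lemma reflIso_apply (hn : 3 ≤ n) (c x : Fin n) : reflIso hn c x = c - x := rfl

def pairPart (a b : Fin n) : Finpartition (univ : Finset (Fin n)) where
  parts := insert {a, b} ((univ \ {a, b}).image (fun x => {x}))
  supIndep := by
    rw [Finset.supIndep_iff_pairwiseDisjoint]
    intro p hp q hq hpq
    simp only [coe_insert, Set.mem_insert_iff, coe_image, Set.mem_image, mem_coe,
      mem_sdiff, mem_univ, true_and, mem_insert, mem_singleton] at hp hq
    rw [Function.onFun, Finset.disjoint_left]
    rcases hp with hp | ⟨x, hx, hp⟩ <;> rcases hq with hq | ⟨y, hy, hq⟩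
    · exact absurd (hp.trans hq.symm) hpq
    · subst hp hq
      intro v hv hv'
      simp only [id, mem_insert, mem_singleton] at hv hv'
      rcases hv with rfl | rfl <;> tauto
    · subst hp hq
      intro v hv hv'
      simp only [id, mem_insert, mem_singleton] at hv hv'
      rcases hv' with rfl | rfl <;> tauto
    · subst hp hq
      intro v hv hv'
      simp only [id, mem_singleton] at hv hv'
      subst hv hv'
      exact hpq rfl
  sup_parts := by
    ext v
    simp only [mem_sup, mem_insert, mem_univ, iff_true]
    by_cases hv : v = a ∨ v = b
    · exact ⟨{a, b}, Or.inl rfl, by simpa using hv⟩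
    · push_neg at hv
      exact ⟨{v}, Or.inr (mem_image_of_mem _ (by simp [hv])), mem_singleton_self v⟩
  bot_notMem := by
    simp only [bot_eq_empty, mem_insert, mem_image, mem_sdiff, mem_univ, true_and]
    push_neg
    constructor
    · intro h
      have : a ∈ ({a, b} : Finset (Fin n)) := by simp
      rw [← h] at this; simp at this
    · intro x _
      exact singleton_nonempty x

lemma pairPart_parts (a b : Fin n) :
    (pairPart a b).parts = insert {a, b} ((univ \ {a, b}).image (fun x => {x})) := rfl

lemma pairPart_comm (a b : Fin n) : pairPart a b = pairPart b a := by
  apply Finpartition.ext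
  rw [pairPart_parts, pairPart_parts, Finset.pair_comm a b]

lemma pairPart_card {a b : Fin n} (hab : a ≠ b) :
    (pairPart a b).parts.card = n - 1 := by
  rw [pairPart_parts]
  have hnm : ({a, b} : Finset (Fin n)) ∉ (univ \ {a, b}).image (fun x => {x}) := by
    simp only [mem_image, mem_sdiff, mem_univ, true_and]
    rintro ⟨x, hx, h⟩
    have : ({a,b} : Finset (Fin n)).card = 1 := by rw [← h]; simp
    rw [Finset.card_pair hab] at this; omega
  rw [Finset.card_insert_of_notMem hnm,
    Finset.card_image_of_injective _ (fun x y h => by simpa using h),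
    Finset.card_sdiff_of_subset (subset_univ _), Finset.card_univ, Fintype.card_fin,
    Finset.card_pair hab]
  have := NeZero.pos n
  omega

lemma parts_card_pred (hn : 3 ≤ n) (P : Finpartition (univ : Finset (Fin n)))
    (hP : P.parts.card = n - 1) : ∃ a b : Fin n, a ≠ b ∧ P = pairPart a b := by
  have hsum : ∑ p ∈ P.parts, p.card = n := by
    rw [P.sum_card_parts, Finset.card_univ, Fintype.card_fin]
  have hpos : ∀ p ∈ P.parts, 1 ≤ p.card := by
    intro p hp
    exact Finset.card_pos.2 (P.nonempty_of_mem_parts hp)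
  have hsub : ∑ p ∈ P.parts, (p.card - 1) = 1 := by
    have : ∑ p ∈ P.parts, p.card = ∑ p ∈ P.parts, ((p.card - 1) + 1) :=
      Finset.sum_congr rfl (fun p hp => by have := hpos p hp; omega)
    rw [Finset.sum_add_distrib, Finset.sum_const, smul_eq_mul, mul_one, hP] at this
    omega
  -- find the unique part with card 2
  have hex : ∃ p ∈ P.parts, p.card - 1 = 1 := by
    by_contra h
    push_neg at h
    have : ∑ p ∈ P.parts, (p.card - 1) = 0 :=
      Finset.sum_eq_zero (fun p hp => by
        have hle := Finset.single_le_sum (f := fun q => q.card - 1)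
          (fun q _ => Nat.zero_le _) hp
        rw [hsub] at hle
        have hle2 : p.card - 1 ≤ 1 := hle
        have h1 := h p hp
        omega)
    omega
  obtain ⟨p, hp, hp2⟩ := hex
  have hothers : ∀ q ∈ P.parts, q ≠ p → q.card = 1 := by
    intro q hq hqp
    have h1 : ∑ x ∈ P.parts.erase p, (x.card - 1) = 0 := by
      have h2 : (p.card - 1) + ∑ x ∈ P.parts.erase p, (x.card - 1)
          = ∑ x ∈ P.parts, (x.card - 1) := Finset.add_sum_erase P.parts (fun q => q.card - 1) hp
      omega
    have := (Finset.sum_eq_zero_iff).1 h1 q (Finset.mem_erase.2 ⟨hqp, hq⟩)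
    have := hpos q hq
    omega
  have hpcard : p.card = 2 := by have := hpos p hp; omega
  obtain ⟨a, b, hab, rfl⟩ := Finset.card_eq_two.1 hpcard
  refine ⟨a, b, hab, ?_⟩
  apply Finpartition.ext
  rw [pairPart_parts]
  ext q
  simp only [mem_insert, mem_image, mem_sdiff, mem_univ, true_and]
  constructor
  · intro hq
    by_cases hqp : q = {a, b}
    · exact Or.inl hqp
    · obtain ⟨x, rfl⟩ := Finset.card_eq_one.1 (hothers q hq hqp)
      refine Or.inr ⟨x, ?_, rfl⟩
      simp only [mem_insert, mem_singleton]
      rintro (rfl | rfl)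
      · exact hqp (P.eq_of_mem_parts hq hp (mem_singleton_self x) (by simp))
      · exact hqp (P.eq_of_mem_parts hq hp (mem_singleton_self x) (by simp))
  · rintro (rfl | ⟨x, hx, rfl⟩)
    · exact hp
    · simp only [mem_insert, mem_singleton] at hx
      push_neg at hx
      obtain ⟨q', hq', hxq'⟩ := P.exists_mem (mem_univ x)
      have hq'p : q' ≠ {a, b} := by
        rintro rfl
        simp only [mem_insert, mem_singleton] at hxq'
        tauto
      obtain ⟨y, hy⟩ := Finset.card_eq_one.1 (hothers q' hq' hq'p)
      subst hy
      rw [mem_singleton] at hxq'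
      rw [hxq']
      exact hq'

lemma image_pairPart (e : Fin n ≃ Fin n) (a b : Fin n) :
    (pairPart a b).parts.image (fun p => p.image e) = (pairPart (e a) (e b)).parts := by
  rw [pairPart_parts, pairPart_parts, Finset.image_insert]
  congr 1
  · simp
  rw [Finset.image_image]
  have h1 : (univ \ {a, b}).image e = univ \ {e a, e b} := by
    rw [Finset.image_sdiff univ {a,b} e.injective]
    congr 1
    · exact Finset.image_univ_equiv e
    · simp
  rw [← h1, Finset.image_image]
  apply Finset.image_congr
  intro x _
  simp

lemma fixes_outside {a b : Fin n} (α : cycleGraph n ≃g cycleGraph n)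
    (h : ∀ p ∈ (pairPart a b).parts, p.image ⇑α = p) :
    ∀ x : Fin n, x ≠ a → x ≠ b → α x = x := by
  intro x hxa hxb
  have hx : ({x} : Finset (Fin n)) ∈ (pairPart a b).parts := by
    rw [pairPart_parts]
    exact mem_insert_of_mem (mem_image_of_mem _ (by simp [hxa, hxb]))
  have := h _ hx
  rw [Finset.image_singleton] at this
  exact mem_singleton.1 (this ▸ mem_singleton_self (α x))

lemma pairPart_isDC (hn : 5 ≤ n) {a b : Fin n} (hab : a ≠ b) :
    IsDCPartition (cycleGraph n) (pairPart a b) := by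
  intro α hα
  have hfix := fixes_outside α hα
  -- find three distinct elements outside {a, b}
  have hcard : 3 ≤ (univ \ {a, b} : Finset (Fin n)).card := by
    rw [Finset.card_sdiff_of_subset (subset_univ _), Finset.card_univ, Fintype.card_fin,
      Finset.card_pair hab]
    omega
  obtain ⟨t, hts, ht3⟩ := Finset.exists_subset_card_eq hcard
  obtain ⟨x, y, z, hxy, hxz, hyz, rfl⟩ := Finset.card_eq_three.1 ht3
  have hmem : ∀ w ∈ ({x, y, z} : Finset (Fin n)), w ≠ a ∧ w ≠ b := by
    intro w hw
    have := hts hw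
    simp only [mem_sdiff, mem_univ, true_and, mem_insert, mem_singleton] at this
    push_neg at this
    exact this
  have hx' := hmem x (by simp)
  have hy' := hmem y (by simp)
  have hz' := hmem z (by simp)
  have fx := hfix x hx'.1 hx'.2
  have fy := hfix y hy'.1 hy'.2
  have fz := hfix z hz'.1 hz'.2
  have hn3 : 3 ≤ n := by omega
  by_cases hd : x + x = y + y
  · by_cases hd2 : x + x = z + z
    · exfalso
      have w1 : (x - y) + (x - y) = 0 := by linear_combination hd
      have w2 : (x - z) + (x - z) = 0 := by linear_combination hd2
      have := double_unique hn3 w1 w2 (fun h => hxy (by linear_combination h))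
        (fun h => hxz (by linear_combination h))
      exact hyz (by linear_combination -this)
    · exact fix_two hn3 α hd2 fx fz
  · exact fix_two hn3 α hd fx fy

lemma equiv_of_pairs (hn : 3 ≤ n) {a b a' b' : Fin n}
    (h : b' - a' = b - a ∨ b' - a' = a - b) :
    PartEquiv (cycleGraph n) (pairPart a b) (pairPart a' b') := by
  rcases h with h | h
  · refine ⟨rotIso hn (a' - a), ?_⟩
    rw [show ((rotIso hn (a' - a) : Fin n → Fin n)) = ⇑(Equiv.addRight (a' - a)) from rfl]
    rw [image_pairPart]
    have e1 : (Equiv.addRight (a' - a)) a = a' := by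
      simp only [Equiv.coe_addRight]; ring
    have e2 : (Equiv.addRight (a' - a)) b = b' := by
      simp only [Equiv.coe_addRight]; linear_combination -h
    rw [e1, e2]
  · refine ⟨reflIso hn (a + a'), ?_⟩
    rw [show ((reflIso hn (a + a') : Fin n → Fin n)) = ⇑(Equiv.subLeft (a + a')) from rfl]
    rw [image_pairPart]
    have e1 : (Equiv.subLeft (a + a')) a = a' := by
      simp only [Equiv.subLeft_apply]; ring
    have e2 : (Equiv.subLeft (a + a')) b = b' := by
      simp only [Equiv.subLeft_apply]; linear_combination -h
    rw [e1, e2]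

lemma pair_mem_pairPart (a b : Fin n) : ({a, b} : Finset (Fin n)) ∈ (pairPart a b).parts := by
  rw [pairPart_parts]; exact mem_insert_self _ _

lemma pairs_of_parts_eq {a b a' b' : Fin n} (hab : a ≠ b)
    (h : (pairPart a b).parts = (pairPart a' b').parts) :
    ({a, b} : Finset (Fin n)) = {a', b'} := by
  have hm : ({a, b} : Finset (Fin n)) ∈ (pairPart a' b').parts := h ▸ pair_mem_pairPart a b
  rw [pairPart_parts] at hm
  rcases mem_insert.1 hm with h' | h'
  · exact h'
  · exfalso
    obtain ⟨x, -, hx⟩ := mem_image.1 h'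
    have : ({a, b} : Finset (Fin n)).card = 1 := by rw [← hx]; simp
    rw [Finset.card_pair hab] at this
    omega

lemma pair_eq_cases {a b a' b' : Fin n} (h : ({a, b} : Finset (Fin n)) = {a', b'}) :
    (a = a' ∧ b = b') ∨ (a = b' ∧ b = a') := by
  have ha : a ∈ ({a', b'} : Finset (Fin n)) := h ▸ (by simp)
  have hb : b ∈ ({a', b'} : Finset (Fin n)) := h ▸ (by simp)
  have ha' : a' ∈ ({a, b} : Finset (Fin n)) := h ▸ (by simp)
  have hb' : b' ∈ ({a, b} : Finset (Fin n)) := h ▸ (by simp)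
  simp only [mem_insert, mem_singleton] at ha hb ha' hb'
  tauto

lemma diff_of_equiv (hn : 3 ≤ n) {a b a' b' : Fin n} (hab : a ≠ b)
    (h : PartEquiv (cycleGraph n) (pairPart a b) (pairPart a' b')) :
    b' - a' = b - a ∨ b' - a' = a - b := by
  obtain ⟨α, hα⟩ := h
  have himg : (pairPart (α a) (α b)).parts = (pairPart a' b').parts := by
    rw [← hα]
    exact (image_pairPart α.toEquiv a b).symm
  have hab2 : α a ≠ α b := fun h => hab (α.injective h)
  have hpair := pairs_of_parts_eq hab2 himg
  have hdiff : α b - α a = b - a ∨ α b - α a = a - b := by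
    rcases aut_cases hn α with h | h
    · left; rw [h a, h b]; ring
    · right; rw [h a, h b]; ring
  rcases pair_eq_cases hpair with ⟨h1, h2⟩ | ⟨h1, h2⟩ <;>
    rcases hdiff with hd | hd
  · left; rw [← h1, ← h2]; exact hd
  · right; rw [← h1, ← h2]; exact hd
  · right; rw [← h1, ← h2]; linear_combination -hd
  · left; rw [← h1, ← h2]; linear_combination -hd

lemma partEquiv_refl {V : Type*} [DecidableEq V] [Fintype V] (G : SimpleGraph V)
    (P : Finpartition (univ : Finset V)) : PartEquiv G P P := by
  refine ⟨Iso.refl, ?_⟩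
  have : (fun p : Finset V => p.image ⇑(Iso.refl : G ≃g G)) = id := by
    funext p
    exact Finset.image_id
  rw [this, Finset.image_id]

lemma partEquiv_symm {V : Type*} [DecidableEq V] [Fintype V] {G : SimpleGraph V}
    {P₁ P₂ : Finpartition (univ : Finset V)} (h : PartEquiv G P₁ P₂) : PartEquiv G P₂ P₁ := by
  obtain ⟨α, hα⟩ := h
  refine ⟨α.symm, ?_⟩
  rw [← hα, Finset.image_image]
  have : ((fun p : Finset V => p.image ⇑α.symm) ∘ (fun p : Finset V => p.image ⇑α)) = id := by
    funext p
    simp only [Function.comp_apply, Finset.image_image, id]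
    rw [show (⇑α.symm ∘ ⇑α) = id from funext (fun x => α.symm_apply_apply x), Finset.image_id]
  rw [this, Finset.image_id]

lemma partEquiv_trans {V : Type*} [DecidableEq V] [Fintype V] {G : SimpleGraph V}
    {P₁ P₂ P₃ : Finpartition (univ : Finset V)} (h : PartEquiv G P₁ P₂)
    (h' : PartEquiv G P₂ P₃) : PartEquiv G P₁ P₃ := by
  obtain ⟨α, hα⟩ := h
  obtain ⟨β, hβ⟩ := h'
  refine ⟨α.trans β, ?_⟩
  rw [← hβ, ← hα, Finset.image_image]
  apply Finset.image_congr
  intro p _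
  simp [Finset.image_image]

lemma neg_val (hn : 3 ≤ n) {d : Fin n} (hd : d ≠ 0) : (-d).val = n - d.val := by
  have h0 : d + (-d) = 0 := by ring
  have hv : (d.val + (-d).val) % n = 0 := by
    have := congrArg Fin.val h0
    rwa [Fin.val_add, Fin.val_zero] at this
  have h1 : d.val < n := d.isLt
  have h2 : (-d).val < n := (-d).isLt
  have h3 : 0 < d.val := Nat.pos_of_ne_zero (fun h => hd (Fin.ext h))
  rcases lt_or_ge (d.val + (-d).val) n with h' | h'
  · rw [Nat.mod_eq_of_lt h'] at hv; omega
  · rw [Nat.mod_eq_sub_mod h', Nat.mod_eq_of_lt (by omega)] at hv; omega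

theorem psi_cycle_ge5 (hn : 5 ≤ n) : psi (cycleGraph n) (n - 1) = n / 2 := by
  have hn3 : 3 ≤ n := by omega
  unfold psi
  set S := {P : Finpartition (Finset.univ : Finset (Fin n)) //
      IsDCPartition (cycleGraph n) P ∧ P.parts.card = n - 1} with hS
  set r : S → S → Prop := fun P₁ P₂ => PartEquiv (cycleGraph n) P₁.1 P₂.1 with hr
  have hequiv : Equivalence r :=
    ⟨fun P => partEquiv_refl _ _, fun h => partEquiv_symm h, fun h h' => partEquiv_trans h h'⟩
  have hmval : ∀ i : Fin (n/2), ((i.val + 1 : ℕ) : Fin n).val = i.val + 1 := by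
    intro i
    have := i.isLt
    exact Fin.val_cast_of_lt (by omega)
  have hne0 : ∀ i : Fin (n/2), (0 : Fin n) ≠ ((i.val + 1 : ℕ) : Fin n) := by
    intro i h
    have := congrArg Fin.val h
    rw [hmval i, Fin.val_zero] at this
    omega
  set f : Fin (n/2) → Quot r := fun i => Quot.mk r
    ⟨pairPart 0 ((i.val + 1 : ℕ) : Fin n), pairPart_isDC hn (hne0 i),
      pairPart_card (hne0 i)⟩ with hf
  have hinj : Function.Injective f := by
    intro i j h
    have hrel : r _ _ := (hequiv.eqvGen_iff).1 (Quot.eq.1 h)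
    have hdiff := diff_of_equiv hn3 (hne0 i) hrel
    rw [sub_zero, sub_zero, zero_sub] at hdiff
    have hi := i.isLt
    have hj := j.isLt
    rcases hdiff with hd | hd
    · have := congrArg Fin.val hd
      rw [hmval i, hmval j] at this
      exact Fin.ext (by omega)
    · have hciz : ((i.val + 1 : ℕ) : Fin n) ≠ 0 := fun h => by
        have := congrArg Fin.val h
        rw [hmval i, Fin.val_zero] at this
        omega
      have := congrArg Fin.val hd
      rw [hmval j, neg_val hn3 hciz, hmval i] at this
      exact Fin.ext (by omega)
  have hsurj : Function.Surjective f := by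
    intro q
    obtain ⟨PP, rfl⟩ := Quot.exists_rep q
    obtain ⟨P, hP⟩ := PP
    obtain ⟨a, b, hab, hPeq⟩ := parts_card_pred hn3 P hP.2
    have hd0 : b - a ≠ 0 := fun h => hab (by linear_combination -h)
    have hnegv := neg_val hn3 hd0
    set m := min (b-a).val (-(b-a)).val with hm
    have hdv : (b-a).val ≠ 0 := fun h => hd0 (Fin.ext h)
    have hlt := (b-a).isLt
    have hm1 : 1 ≤ m := by
      have hnv : (-(b-a)).val ≠ 0 := by omega
      omega
    have hm2 : m ≤ n/2 := by omega
    refine ⟨⟨m - 1, by omega⟩, ?_⟩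
    apply Quot.sound
    show PartEquiv (cycleGraph n) (pairPart 0 (((m - 1) + 1 : ℕ) : Fin n)) P
    rw [hPeq, show (m - 1) + 1 = m by omega]
    apply equiv_of_pairs hn3
    rcases le_total (b-a).val (-(b-a)).val with hle | hle
    · left
      rw [sub_zero, hm, min_eq_left hle, Fin.cast_val_eq_self]
    · right
      rw [zero_sub, hm, min_eq_right hle, Fin.cast_val_eq_self, neg_neg]
  have hcard := Nat.card_eq_of_bijective f ⟨hinj, hsurj⟩
  rw [Nat.card_eq_fintype_card, Fintype.card_fin] at hcard
  exact hcard.symm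

-- n = 3 case
lemma c3_adj (u v : Fin 3) : (cycleGraph 3).Adj u v ↔ u ≠ v := by
  rw [cycleGraph_three_eq_top]
  exact top_adj u v

def swapIso3 (a b : Fin 3) : cycleGraph 3 ≃g cycleGraph 3 where
  toEquiv := Equiv.swap a b
  map_rel_iff' := by
    intro u v
    simp only [c3_adj]
    exact (Equiv.swap a b).injective.ne_iff

lemma c3_notDC {a b : Fin 3} (hab : a ≠ b) :
    ¬ IsDCPartition (cycleGraph 3) (pairPart a b) := by
  intro hDC
  have hα : ∀ p ∈ (pairPart a b).parts, p.image ⇑(swapIso3 a b) = p := by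
    intro p hp
    rw [pairPart_parts] at hp
    rcases mem_insert.1 hp with rfl | hp
    · show Finset.image (⇑(Equiv.swap a b)) {a, b} = {a, b}
      rw [Finset.image_insert, Finset.image_singleton, Equiv.swap_apply_left,
        Equiv.swap_apply_right, Finset.pair_comm]
    · obtain ⟨x, hx, rfl⟩ := mem_image.1 hp
      simp only [mem_sdiff, mem_univ, true_and, mem_insert, mem_singleton] at hx
      push_neg at hx
      show Finset.image (⇑(Equiv.swap a b)) {x} = {x}
      rw [Finset.image_singleton, Equiv.swap_apply_of_ne_of_ne hx.1 hx.2]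
  have := hDC (swapIso3 a b) hα a
  rw [show (swapIso3 a b) a = b from Equiv.swap_apply_left a b] at this
  exact hab this.symm

theorem psi_c3 : psi (cycleGraph 3) 2 = 0 := by
  unfold psi
  have hempty : IsEmpty {P : Finpartition (Finset.univ : Finset (Fin 3)) //
      IsDCPartition (cycleGraph 3) P ∧ P.parts.card = 2} := by
    constructor
    rintro ⟨P, hDC, hcard⟩
    obtain ⟨a, b, hab, rfl⟩ := parts_card_pred (by norm_num) P (by omega)
    exact c3_notDC hab hDC
  haveI := hempty
  exact Nat.card_of_isEmpty

-- n = 4 case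
lemma c4_all : ∀ d : Fin 4, d = 0 ∨ d = 1 ∨ d = 2 ∨ d = 3 := by decide

lemma c4_notDC_opp (a : Fin 4) : ¬ IsDCPartition (cycleGraph 4) (pairPart a (a + 2)) := by
  intro hDC
  have h4 : (4 : Fin 4) = 0 := by decide
  set α := reflIso (show (3:ℕ) ≤ 4 by norm_num) (a + (a + 2)) with hαdef
  have hα : ∀ p ∈ (pairPart a (a + 2)).parts, p.image ⇑α = p := by
    intro p hp
    rw [pairPart_parts] at hp
    rcases mem_insert.1 hp with rfl | hp
    · rw [Finset.image_insert, Finset.image_singleton]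
      have e1 : α a = a + 2 := by rw [hαdef, reflIso_apply]; ring
      have e2 : α (a + 2) = a := by rw [hαdef, reflIso_apply]; ring
      rw [e1, e2, Finset.pair_comm]
    · obtain ⟨x, hx, rfl⟩ := mem_image.1 hp
      simp only [mem_sdiff, mem_univ, true_and, mem_insert, mem_singleton] at hx
      push_neg at hx
      rw [Finset.image_singleton]
      have : α x = x := by
        rw [hαdef, reflIso_apply]
        rcases c4_all (x - a) with h | h | h | h
        · exact absurd (show x = a by linear_combination h) hx.1
        · linear_combination -2*h
        · exact absurd (show x = a + 2 by linear_combination h) hx.2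
        · linear_combination -2*h - h4
      rw [this]
  have := hDC α hα a
  rw [hαdef, reflIso_apply] at this
  have h2 : (2 : Fin 4) = 0 := by linear_combination this
  exact (by decide : (2 : Fin 4) ≠ 0) h2

lemma c4_DC_adj (a : Fin 4) : IsDCPartition (cycleGraph 4) (pairPart a (a + 1)) := by
  intro α hα
  have h4 : (4 : Fin 4) = 0 := by decide
  have hfix := fixes_outside α hα
  have f2 : α (a + 2) = a + 2 := by
    apply hfix
    · intro h
      exact (by decide : (2 : Fin 4) ≠ 0) (by linear_combination h)
    · intro h
      exact (by decide : (1 : Fin 4) ≠ 0) (by linear_combination h)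
  have f3 : α (a + 3) = a + 3 := by
    apply hfix
    · intro h
      exact (by decide : (3 : Fin 4) ≠ 0) (by linear_combination h)
    · intro h
      exact (by decide : (2 : Fin 4) ≠ 0) (by linear_combination h)
  refine fix_two (by norm_num) α ?_ f2 f3
  intro h
  exact (by decide : (2 : Fin 4) ≠ 0) (by linear_combination -h)

lemma c4_d13 {a b : Fin 4} (hab : a ≠ b)
    (hDC : IsDCPartition (cycleGraph 4) (pairPart a b)) : b - a = 1 ∨ b - a = 3 := by
  rcases c4_all (b - a) with h | h | h | h
  · exact absurd (show a = b by linear_combination -h) hab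
  · exact Or.inl h
  · exfalso
    have hb : b = a + 2 := by linear_combination h
    rw [hb] at hDC
    exact c4_notDC_opp a hDC
  · exact Or.inr h

theorem psi_c4 : psi (cycleGraph 4) 3 = 1 := by
  unfold psi
  rw [Nat.card_eq_one_iff_unique]
  have h4 : (4 : Fin 4) = 0 := by decide
  constructor
  · constructor
    intro q q'
    obtain ⟨⟨P, hP⟩, rfl⟩ := Quot.exists_rep q
    obtain ⟨⟨Q, hQ⟩, rfl⟩ := Quot.exists_rep q'
    apply Quot.sound
    show PartEquiv (cycleGraph 4) P Q
    obtain ⟨a, b, hab, rfl⟩ := parts_card_pred (by norm_num) P (by omega)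
    obtain ⟨a', b', hab', rfl⟩ := parts_card_pred (by norm_num) Q (by omega)
    have hd1 := c4_d13 hab hP.1
    have hd2 := c4_d13 hab' hQ.1
    apply equiv_of_pairs (by norm_num)
    rcases hd1 with hd1 | hd1 <;> rcases hd2 with hd2 | hd2
    · left; linear_combination hd2 - hd1
    · right; linear_combination hd2 + hd1 + h4
    · right; linear_combination hd2 + hd1 + h4
    · left; linear_combination hd2 - hd1
  · refine ⟨Quot.mk _ ⟨pairPart 0 1, ?_, ?_⟩⟩
    · have := c4_DC_adj 0
      rwa [show ((0 : Fin 4) + 1) = 1 by decide] at this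
    · rw [pairPart_card (by decide : (0 : Fin 4) ≠ 1)]

end CycleAux

theorem psi_cycleGraph_pred :
    psi (cycleGraph 3) 2 = 0 ∧ psi (cycleGraph 4) 3 = 1 ∧
    ∀ n : ℕ, 5 ≤ n → psi (cycleGraph n) (n - 1) = n / 2 := by
  refine ⟨CycleAux.psi_c3, CycleAux.psi_c4, fun n hn => ?_⟩
  haveI : NeZero n := ⟨by omega⟩
  exact CycleAux.psi_cycle_ge5 hn
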